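/- Let n ≥ 2, let u : ℝⁿ → ℝⁿ be of class C² and let φ : ℝⁿ → ℝⁿ be of class C¹ with compact support. Assume div u = 0 on ℍ and uⁿ(x', 0) = φⁿ(x', 0) = 0 for all x' ∈ ℝⁿ⁻¹. Then ∫_ℍ Σᵢⱼ (∂ⱼuⁱ)(∂ᵢφʲ) dx = 0; consequently ∫_ℍ 2 ε(u) : ε(φ) dx = ∫_ℍ ∇u : ∇φ dx, where ε(v) := ½(∇v + ∇vᵀ) is the symmetric gradient and M : N := Σᵢⱼ Mᵢⱼ Nᵢⱼ. -/

import Mathlib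

/-! The mixed term `∑ᵢⱼ ∂ⱼuⁱ ∂ᵢφʲ` is the divergence of the convective derivative `(φ·∇)u`
minus `φ·∇(div u)`, and the latter vanishes on the open half-space. The normal component
`∑ⱼ φʲ ∂ⱼuⁿ` of `(φ·∇)u` vanishes on `∂ℍ`: `φⁿ = 0` there, and for `j ≠ n` the derivative `∂ⱼuⁿ`
is tangential to `∂ℍ`, on which `uⁿ` vanishes. The divergence theorem on a box
`[-R, R]ⁿ⁻¹ × [0, R]` containing the support of `φ` in `ℍ̄` therefore gives zero. Expanding
`2 ε(u):ε(φ)` and exchanging the order of summation yields `∇u:∇φ` plus the mixed term. -/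

open MeasureTheory

/-- Partial derivative in direction `i` of a scalar field on `ℝⁿ`. -/
noncomputable def pd {n : ℕ} (i : Fin n) (f : (Fin n → ℝ) → ℝ) : (Fin n → ℝ) → ℝ :=
  fun x => fderiv ℝ f x (Pi.single i 1)

open Set Filter Topology

section PartialDeriv

variable {n : ℕ} {f g : (Fin n → ℝ) → ℝ} {x : Fin n → ℝ}

theorem pd_mul (hf : DifferentiableAt ℝ f x) (hg : DifferentiableAt ℝ g x) (k : Fin n) :
    pd k (fun y => f y * g y) x = pd k f x * g x + f x * pd k g x := by
  simp only [pd, fderiv_fun_mul hf hg, add_apply, smul_apply, smul_eq_mul]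
  ring

theorem pd_sum {ι : Type*} (s : Finset ι) {f : ι → (Fin n → ℝ) → ℝ}
    (hf : ∀ i ∈ s, DifferentiableAt ℝ (f i) x) (k : Fin n) :
    pd k (fun y => ∑ i ∈ s, f i y) x = ∑ i ∈ s, pd k (f i) x := by
  simp [pd, fderiv_fun_sum hf]

theorem pd_eq_zero_of_eventuallyEq_zero (h : f =ᶠ[𝓝 x] 0) (k : Fin n) : pd k f x = 0 := by
  simp [pd, h.fderiv_eq]

theorem pd_comm (hf : ContDiffAt ℝ 2 f x) (j k : Fin n) :
    pd k (pd j f) x = pd j (pd k f) x := by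
  have hd : DifferentiableAt ℝ (fderiv ℝ f) x :=
    (hf.fderiv_right le_rfl).differentiableAt one_ne_zero
  unfold pd
  rw [fderiv_clm_apply hd (differentiableAt_const _),
    fderiv_clm_apply hd (differentiableAt_const _)]
  simpa using hf.isSymmSndFDerivAt (by simp) (Pi.single k 1) (Pi.single j 1)

theorem pd_eq_zero_of_vanishing_on_hyperplane {l j : Fin n} (hf : DifferentiableAt ℝ f x)
    (hzero : ∀ y, y l = 0 → f y = 0) (hx : x l = 0) (hj : j ≠ l) : pd j f x = 0 := by
  have hline : HasDerivAt (fun t : ℝ => f (x + t • Pi.single j 1)) (pd j f x) 0 := by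
    refine HasFDerivAt.comp_hasDerivAt (f := fun t : ℝ => x + t • Pi.single j (1 : ℝ)) 0
      (by simpa using hf.hasFDerivAt) ?_
    simpa using ((hasDerivAt_id (0 : ℝ)).smul_const (Pi.single j (1 : ℝ))).const_add x
  have hconst : (fun t : ℝ => f (x + t • Pi.single j 1)) = fun _ => 0 :=
    funext fun t => hzero _ (by simp [hx, Pi.single_eq_of_ne' hj])
  rw [hconst] at hline
  exact hline.unique (hasDerivAt_const 0 0)

theorem ContDiff.pd {k m : WithTop ℕ∞} (hf : ContDiff ℝ k f) (hkm : m + 1 ≤ k) (j : Fin n) :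
    ContDiff ℝ m (_root_.pd j f) :=
  (ContinuousLinearMap.apply ℝ ℝ (Pi.single j 1 : Fin n → ℝ)).contDiff.comp (hf.fderiv_right hkm)

end PartialDeriv

noncomputable def divergence {n : ℕ} (F : (Fin n → ℝ) → Fin n → ℝ) : (Fin n → ℝ) → ℝ :=
  fun x => ∑ i, pd i (fun y => F y i) x

theorem divergence_eq_zero_of_notMem_tsupport {n : ℕ} {F : (Fin n → ℝ) → Fin n → ℝ}
    {x : Fin n → ℝ} (hx : x ∉ tsupport F) : divergence F x = 0 :=
  Finset.sum_eq_zero fun i _ => pd_eq_zero_of_eventuallyEq_zero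
    ((notMem_tsupport_iff_eventuallyEq.1 hx).mono fun y hy => by simp [hy]) i

theorem integral_halfSpace_divergence_eq_zero {n : ℕ} (l : Fin n)
    {F : (Fin n → ℝ) → Fin n → ℝ} (hF : ContDiff ℝ 1 F) (hFs : HasCompactSupport F)
    (hFb : ∀ x, x l = 0 → F x l = 0) :
    ∫ x in {x | 0 < x l}, divergence F x = 0 := by
  obtain ⟨m, rfl⟩ := Nat.exists_eq_add_one.mpr l.pos
  obtain ⟨R, hR0, hR⟩ := hFs.isBounded.subset_ball_lt 0 0
  have hcoord : ∀ x ∈ tsupport F, ∀ i, |x i| < R := fun x hx i =>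
    (norm_le_pi_norm x i).trans_lt (by simpa using hR hx)
  have hF0 : ∀ x i, |x i| = R → F x = 0 := fun x i hx =>
    image_eq_zero_of_notMem_tsupport fun hmem => (hcoord x hmem i).ne hx
  set a : Fin (m + 1) → ℝ := fun i => if i = l then 0 else -R
  set b : Fin (m + 1) → ℝ := fun _ => R
  have hle : a ≤ b := fun i => by dsimp only [a, b]; split_ifs <;> linarith
  have hbox : (pi univ fun i => Ioo (a i) (b i)) ⊆ {x | 0 < x l} := fun x hx => by
    simpa [a] using (hx l (mem_univ l)).1
  have hsupp : ∀ x ∈ {x | 0 < x l} \ pi univ fun i => Ioo (a i) (b i), divergence F x = 0 := by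
    rintro x ⟨hxl, hxbox⟩
    refine divergence_eq_zero_of_notMem_tsupport fun hmem => hxbox fun i _ => ?_
    have hxi := abs_lt.1 (hcoord x hmem i)
    by_cases hi : i = l
    · subst hi; exact ⟨by simpa [a] using hxl, hxi.2⟩
    · exact ⟨by simpa [a, hi] using hxi.1, hxi.2⟩
  have hcomp : ∀ i, ContDiff ℝ 1 (fun y => F y i) := contDiff_pi.1 hF
  have hcont : Continuous (divergence F) :=
    continuous_finsetSum _ fun i _ => ((hcomp i).pd (zero_add 1).le i).continuous
  calc ∫ x in {x | 0 < x l}, divergence F x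
      = ∫ x in pi univ fun i => Ioo (a i) (b i), divergence F x :=
        setIntegral_eq_of_subset_of_forall_sdiff_eq_zero
          (measurableSet_lt measurable_const (measurable_pi_apply l)) hbox hsupp
    _ = ∫ x in Icc a b, divergence F x :=
        setIntegral_congr_set (by rw [volume_pi]; exact Measure.univ_pi_Ioo_ae_eq_Icc)
    _ = 0 := by
        change ∫ x in Icc a b, ∑ i, fderiv ℝ (fun y => F y i) x (Pi.single i 1) = 0
        rw [integral_divergence_of_hasFDerivAt_off_countable' a b hle
          (fun i y => F y i) (fun i y => fderiv ℝ (fun y => F y i) y) ∅ countable_empty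
          (fun i => (hcomp i).continuous.continuousOn)
          (fun x _ i => ((hcomp i).differentiable one_ne_zero x).hasFDerivAt)
          (hcont.continuousOn.integrableOn_compact isCompact_Icc)]
        refine Finset.sum_eq_zero fun i _ => ?_
        have hfront : ∀ y, F (i.insertNth (b i) y) i = 0 := fun y => by
          rw [hF0 _ i (by simp [b, hR0.le]), Pi.zero_apply]
        have hback : ∀ y, F (i.insertNth (a i) y) i = 0 := fun y => by
          by_cases hi : i = l
          · subst hi; exact hFb _ (by simp [a])
          · rw [hF0 _ i (by simp [a, hi, hR0.le]), Pi.zero_apply]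
        simp [hfront, hback]

noncomputable def convectiveDeriv {n : ℕ} (φ u : (Fin n → ℝ) → Fin n → ℝ) :
    (Fin n → ℝ) → Fin n → ℝ :=
  fun y k => ∑ j, φ y j * pd j (fun z => u z k) y

section Convective

variable {n : ℕ} {φ u : (Fin n → ℝ) → Fin n → ℝ} {x : Fin n → ℝ}

theorem divergence_convectiveDeriv (hφ : DifferentiableAt ℝ φ x) (hu : ContDiff ℝ 2 u) :
    divergence (convectiveDeriv φ u) x =
      ∑ i, ∑ j, pd j (fun y => u y i) x * pd i (fun y => φ y j) x +
        ∑ j, φ x j * pd j (divergence u) x := by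
  have hφj : ∀ j, DifferentiableAt ℝ (fun y => φ y j) x := differentiableAt_pi.1 hφ
  have hui : ∀ i, ContDiff ℝ 2 (fun y => u y i) := contDiff_pi.1 hu
  have hdu : ∀ i j, Differentiable ℝ (pd j fun y => u y i) := fun i j =>
    ((hui i).pd (le_refl (1 + 1 : WithTop ℕ∞)) j).differentiable one_ne_zero
  have hgrad_div : ∀ j, pd j (divergence u) x = ∑ k, pd k (pd j fun y => u y k) x := fun j => by
    change pd j (fun y => ∑ k, pd k (fun z => u z k) y) x = _
    rw [pd_sum _ fun k _ => hdu k k x]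
    exact Finset.sum_congr rfl fun k _ => pd_comm (hui k).contDiffAt k j
  simp only [divergence, convectiveDeriv, hgrad_div, Finset.mul_sum]
  rw [Finset.sum_comm (γ := Fin n) (f := fun j k => φ x j * _), ← Finset.sum_add_distrib]
  refine Finset.sum_congr rfl fun k _ => ?_
  rw [pd_sum (f := fun j y => φ y j * pd j (fun z => u z k) y) _
    fun j _ => (hφj j).mul (hdu k j x), ← Finset.sum_add_distrib]
  refine Finset.sum_congr rfl fun j _ => ?_
  rw [pd_mul (hφj j) (hdu k j x)]
  ring

theorem convectiveDeriv_apply_eq_zero_of_boundary {l : Fin n} (hu : Differentiable ℝ u)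
    (hub : ∀ y, y l = 0 → u y l = 0) (hφb : φ x l = 0) (hx : x l = 0) :
    convectiveDeriv φ u x l = 0 := by
  refine Finset.sum_eq_zero fun j _ => ?_
  by_cases hj : j = l
  · rw [hj, hφb, zero_mul]
  · rw [pd_eq_zero_of_vanishing_on_hyperplane (differentiable_pi.1 hu l x) hub hx hj, mul_zero]

end Convective

theorem sum_sum_two_mul_symm_mul_symm {ι K : Type*} [Fintype ι] [Field K] [NeZero (2 : K)]
    (A C : ι → ι → K) :
    ∑ i, ∑ j, 2 * ((A i j + A j i) / 2 * ((C i j + C j i) / 2)) =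
      ∑ i, ∑ j, A i j * C i j + ∑ i, ∑ j, A i j * C j i := by
  have hdiag : ∑ i, ∑ j, A j i * C j i = ∑ i, ∑ j, A i j * C i j := Finset.sum_comm
  have hoff : ∑ i, ∑ j, A j i * C i j = ∑ i, ∑ j, A i j * C j i := Finset.sum_comm
  have hexpand : ∀ i j, 2 * ((A i j + A j i) / 2 * ((C i j + C j i) / 2)) =
      (A i j * C i j + A j i * C j i + (A i j * C j i + A j i * C i j)) / 2 := fun i j => by
    field_simp
    ring
  simp only [hexpand, ← Finset.sum_div, Finset.sum_add_distrib, hdiag, hoff]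
  field_simp
  ring

section Integrals

variable {n : ℕ} {φ u : (Fin n → ℝ) → Fin n → ℝ}

theorem integrable_pd_mul_pd (hu : ContDiff ℝ 1 u) (hφ : ContDiff ℝ 1 φ)
    (hφs : HasCompactSupport φ) (a b c d : Fin n) :
    Integrable fun x => pd a (fun y => u y b) x * pd c (fun y => φ y d) x := by
  have hua : Continuous (pd a fun y => u y b) :=
    ((contDiff_pi.1 hu b).pd (zero_add 1).le a).continuous
  have hφc : Continuous (pd c fun y => φ y d) :=
    ((contDiff_pi.1 hφ d).pd (zero_add 1).le c).continuous
  have hφcs : HasCompactSupport (pd c fun y => φ y d) :=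
    (hφs.comp_left (g := Function.eval d) rfl).fderiv_apply ℝ _
  exact (hua.mul hφc).integrable_of_hasCompactSupport hφcs.mul_left

theorem integral_halfSpace_sum_pd_mul_pd_eq_zero (l : Fin n) (hu : ContDiff ℝ 2 u)
    (hφ : ContDiff ℝ 1 φ) (hφs : HasCompactSupport φ)
    (hdiv : ∀ x, 0 < x l → divergence u x = 0)
    (hub : ∀ x, x l = 0 → u x l = 0) (hφb : ∀ x, x l = 0 → φ x l = 0) :
    ∫ x in {x | 0 < x l}, ∑ i, ∑ j, pd j (fun y => u y i) x * pd i (fun y => φ y j) x = 0 := by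
  have hopen : IsOpen {x : Fin n → ℝ | 0 < x l} := isOpen_lt continuous_const (continuous_apply l)
  have hconv : EqOn (fun x => ∑ i, ∑ j, pd j (fun y => u y i) x * pd i (fun y => φ y j) x)
      (divergence (convectiveDeriv φ u)) {x | 0 < x l} := fun x hx => by
    have hzero : ∀ j, pd j (divergence u) x = 0 :=
      pd_eq_zero_of_eventuallyEq_zero (eventually_of_mem (hopen.mem_nhds hx) hdiv)
    simp [divergence_convectiveDeriv (hφ.differentiable one_ne_zero x) hu, hzero]
  rw [setIntegral_congr_fun hopen.measurableSet hconv]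
  refine integral_halfSpace_divergence_eq_zero l ?_ ?_ fun x hx =>
    convectiveDeriv_apply_eq_zero_of_boundary (hu.differentiable two_ne_zero) hub (hφb x hx) hx
  · exact contDiff_pi.2 fun k => ContDiff.sum fun j _ =>
      (contDiff_pi.1 hφ j).mul ((contDiff_pi.1 hu k).pd le_rfl j)
  · refine hφs.mono fun x hx hφx => hx ?_
    funext k
    simp [convectiveDeriv, hφx]

end Integrals

theorem stmt11_general (n : ℕ) (ln : Fin n)
    (u φ : (Fin n → ℝ) → Fin n → ℝ)
    (hu : ContDiff ℝ 2 u) (hφ : ContDiff ℝ 1 φ) (hφs : HasCompactSupport φ)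
    (hdiv : ∀ x, 0 < x ln → ∑ i, pd i (fun y => u y i) x = 0)
    (hub : ∀ x, x ln = 0 → u x ln = 0)
    (hφb : ∀ x, x ln = 0 → φ x ln = 0) :
    (∫ x in {x : Fin n → ℝ | 0 < x ln},
        ∑ i, ∑ j, pd j (fun y => u y i) x * pd i (fun y => φ y j) x) = 0 ∧
    (∫ x in {x : Fin n → ℝ | 0 < x ln}, ∑ i, ∑ j,
        2 * (((pd j (fun y => u y i) x + pd i (fun y => u y j) x) / 2) *
          ((pd j (fun y => φ y i) x + pd i (fun y => φ y j) x) / 2))) =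
      ∫ x in {x : Fin n → ℝ | 0 < x ln},
        ∑ i, ∑ j, pd j (fun y => u y i) x * pd j (fun y => φ y i) x := by
  have hmix := integral_halfSpace_sum_pd_mul_pd_eq_zero ln hu hφ hφs hdiv hub hφb
  refine ⟨hmix, ?_⟩
  have hint := integrable_pd_mul_pd (hu.of_le one_le_two) hφ hφs
  simp_rw [sum_sum_two_mul_symm_mul_symm fun i j => pd j (fun y => u y i) _]
  rw [integral_add, hmix, add_zero]
  · exact (integrable_finsetSum _ fun i _ =>
      integrable_finsetSum _ fun j _ => hint j i j i).integrableOn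
  · exact (integrable_finsetSum _ fun i _ =>
      integrable_finsetSum _ fun j _ => hint j i i j).integrableOn

/-- For a `C²` field `u` with `div u = 0` on the upper half-space `ℍ` and `uⁿ = 0` on the
flat boundary, and a compactly supported `C¹` field `φ` with `φⁿ = 0` on the boundary,
one has `∫_ℍ Σᵢⱼ ∂ⱼuⁱ ∂ᵢφʲ dx = 0`; consequently `∫_ℍ 2 ε(u):ε(φ) dx = ∫_ℍ ∇u:∇φ dx`,
where `ε(v) = ½(∇v + ∇vᵀ)` is the symmetric gradient. Here `ln` is the last index. -/
theorem stmt11 (n : ℕ) (hn : 2 ≤ n) (ln : Fin n) (hln : (ln : ℕ) = n - 1)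
    (u φ : (Fin n → ℝ) → Fin n → ℝ)
    (hu : ContDiff ℝ 2 u) (hφ : ContDiff ℝ 1 φ) (hφs : HasCompactSupport φ)
    (hdiv : ∀ x, 0 < x ln → ∑ i, pd i (fun y => u y i) x = 0)
    (hub : ∀ x, x ln = 0 → u x ln = 0)
    (hφb : ∀ x, x ln = 0 → φ x ln = 0) :
    (∫ x in {x : Fin n → ℝ | 0 < x ln},
        ∑ i, ∑ j, pd j (fun y => u y i) x * pd i (fun y => φ y j) x) = 0 ∧
    (∫ x in {x : Fin n → ℝ | 0 < x ln}, ∑ i, ∑ j,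
        2 * (((pd j (fun y => u y i) x + pd i (fun y => u y j) x) / 2) *
          ((pd j (fun y => φ y i) x + pd i (fun y => φ y j) x) / 2))) =
      ∫ x in {x : Fin n → ℝ | 0 < x ln},
        ∑ i, ∑ j, pd j (fun y => u y i) x * pd j (fun y => φ y i) x :=
  stmt11_general n ln u φ hu hφ hφs hdiv hub hφb
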